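/- arXiv:2408.09624 — 6 statements merged into one kernel-verified Lean document; each statement's English description precedes it below -/
import Mathlib

section
/- Let g : ℝ^n → ℝ^m be a spline of degree k and f : ℝ^m → ℝ^p a spline of degree k'. Then the composition f ∘ g : ℝ^n → ℝ^p is a spline of degree kk'. -/
noncomputable section

/-- A continuous function `f : ℝ^ι → ℝ` is a (polynomial) spline of degree `k` if there are
polynomials `π_1, …, π_b`, each of total degree at most `k`, such that on every (nonempty) cell
of the induced semialgebraic sign partition, `f` agrees with a polynomial of degree at most `k`. -/
def IsSpline (ι : Type) [Fintype ι] (k : ℕ) (f : (ι → ℝ) → ℝ) : Prop :=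
  Continuous f ∧
  ∃ (b : ℕ) (π : Fin b → MvPolynomial ι ℝ),
    (∀ i, (π i).totalDegree ≤ k) ∧
    ∀ θ : Fin b → SignType,
      ∃ ξ : MvPolynomial ι ℝ, ξ.totalDegree ≤ k ∧
        ∀ x : ι → ℝ, (∀ i, SignType.sign (MvPolynomial.eval x (π i)) = θ i) →
          f x = MvPolynomial.eval x ξ

/-- A vector-valued function is a spline of degree `k` if each coordinate function is. -/
def IsVecSpline (n m k : ℕ) (f : (Fin n → ℝ) → (Fin m → ℝ)) : Prop :=
  ∀ i : Fin m, IsSpline (Fin n) k (fun x => f x i)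

/- ### Auxiliary lemmas -/

lemma aux_eval_aeval {ι : Type} {m : ℕ} (x : ι → ℝ) (G : Fin m → MvPolynomial ι ℝ)
    (q : MvPolynomial (Fin m) ℝ) :
    MvPolynomial.eval x (MvPolynomial.aeval G q)
      = MvPolynomial.eval (fun j => MvPolynomial.eval x (G j)) q := by
  induction q using MvPolynomial.induction_on with
  | C a => simp
  | add p q hp hq => simp only [map_add, hp, hq]
  | mul_X p s hp => simp only [map_mul, MvPolynomial.aeval_X, MvPolynomial.eval_X, hp]

lemma aux_totalDegree_aeval_le {ι : Type} {m : ℕ} (G : Fin m → MvPolynomial ι ℝ) {k : ℕ}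
    (hG : ∀ j, (G j).totalDegree ≤ k) (q : MvPolynomial (Fin m) ℝ) :
    (MvPolynomial.aeval G q).totalDegree ≤ q.totalDegree * k := by
  conv_lhs => rw [q.as_sum]
  rw [map_sum]
  refine (MvPolynomial.totalDegree_finset_sum _ _).trans (Finset.sup_le fun v hv => ?_)
  rw [MvPolynomial.aeval_monomial]
  refine (MvPolynomial.totalDegree_mul _ _).trans ?_
  have h1 : (algebraMap ℝ (MvPolynomial ι ℝ) (q.coeff v)).totalDegree = 0 := by
    rw [MvPolynomial.algebraMap_eq]; exact MvPolynomial.totalDegree_C _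
  rw [h1, zero_add, Finsupp.prod]
  refine (MvPolynomial.totalDegree_finset_prod _ _).trans ?_
  calc ∑ j ∈ v.support, (G j ^ v j).totalDegree
      ≤ ∑ j ∈ v.support, v j * k :=
        Finset.sum_le_sum fun j _ =>
          (MvPolynomial.totalDegree_pow _ _).trans (Nat.mul_le_mul_left _ (hG j))
    _ = (∑ j ∈ v.support, v j) * k := (Finset.sum_mul _ _ _).symm
    _ ≤ q.totalDegree * k := by
        refine Nat.mul_le_mul_right _ ?_
        simpa [Finsupp.sum] using MvPolynomial.le_totalDegree hv

/-- A polynomial of total degree zero evaluates to the same value everywhere. -/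
lemma aux_eval_deg_zero {ι : Type} {p : MvPolynomial ι ℝ} (h : p.totalDegree = 0)
    (x y : ι → ℝ) : MvPolynomial.eval x p = MvPolynomial.eval y p := by
  rw [MvPolynomial.eval_eq, MvPolynomial.eval_eq]
  refine Finset.sum_congr rfl fun d hd => ?_
  have hd0 : ∀ i, d i = 0 := (MvPolynomial.totalDegree_eq_zero_iff ι p).1 h d hd
  have : d.support = ∅ := Finsupp.support_eq_empty.2 (Finsupp.ext fun i => hd0 i)
  simp [this]

/-- A continuous real-valued function with finite range on `ι → ℝ` is constant. -/
lemma aux_const_of_finite {ι : Type} [Fintype ι] {f : (ι → ℝ) → ℝ}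
    (hc : Continuous f) (h : (Set.range f).Finite) (x y : ι → ℝ) : f x = f y := by
  by_contra hne
  have hpre : IsPreconnected (Set.range f) := isPreconnected_range hc
  have hoc := hpre.ordConnected
  rcases lt_or_gt_of_ne hne with hlt | hlt
  · exact Set.Icc_infinite hlt
      (h.subset (hoc.out (Set.mem_range_self x) (Set.mem_range_self y)))
  · exact Set.Icc_infinite hlt
      (h.subset (hoc.out (Set.mem_range_self y) (Set.mem_range_self x)))

/-- `IsSpline` from a partition family indexed by an arbitrary finite type. -/
lemma aux_isSpline_of_index {ι : Type} [Fintype ι] {k : ℕ} {f : (ι → ℝ) → ℝ}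
    (hc : Continuous f) {I : Type} [Fintype I] (π : I → MvPolynomial ι ℝ)
    (hdeg : ∀ i, (π i).totalDegree ≤ k)
    (H : ∀ θ : I → SignType, ∃ ξ : MvPolynomial ι ℝ, ξ.totalDegree ≤ k ∧
      ∀ x : ι → ℝ, (∀ i, SignType.sign (MvPolynomial.eval x (π i)) = θ i) →
        f x = MvPolynomial.eval x ξ) :
    IsSpline ι k f := by
  refine ⟨hc, Fintype.card I, π ∘ (Fintype.equivFin I).symm, fun i => hdeg _, fun θ => ?_⟩
  obtain ⟨ξ, h1, h2⟩ := H (θ ∘ Fintype.equivFin I)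
  refine ⟨ξ, h1, fun x hx => h2 x fun i => ?_⟩
  simpa using hx ((Fintype.equivFin I) i)

/-- If `g : ℝ^n → ℝ^m` is a spline of degree `k` and `f : ℝ^m → ℝ^p` is a spline of degree `k'`,
then `f ∘ g : ℝ^n → ℝ^p` is a spline of degree `k * k'`. -/
theorem spline_comp (n m p k k' : ℕ)
    (g : (Fin n → ℝ) → (Fin m → ℝ)) (f : (Fin m → ℝ) → (Fin p → ℝ))
    (hg : IsVecSpline n m k g) (hf : IsVecSpline m p k' f) :
    IsVecSpline n p (k * k') (f ∘ g) := by
  intro i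
  obtain ⟨hfc, c, σ, hσdeg, Hf⟩ := hf i
  have hgc : Continuous g := continuous_pi fun j => (hg j).1
  have hcomp : Continuous fun x => (f ∘ g) x i := hfc.comp hgc
  rcases Nat.eq_zero_or_pos k' with hk' | hk'
  · -- degree-0 case: `f_i` has finite range, hence is constant
    subst hk'
    choose ξc hξc hξc2 using Hf
    have hfin : (Set.range fun y => f y i).Finite := by
      refine (Set.finite_range fun θ : Fin c → SignType =>
        MvPolynomial.eval (fun _ => (0 : ℝ)) (ξc θ)).subset ?_
      rintro _ ⟨y, rfl⟩
      refine ⟨fun l => SignType.sign (MvPolynomial.eval y (σ l)), ?_⟩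
      rw [hξc2 _ y fun l => rfl]
      exact aux_eval_deg_zero (Nat.le_zero.1 (hξc _)) _ _
    have hconst : ∀ y, f y i = f (g fun _ => 0) i :=
      fun y => aux_const_of_finite hfc hfin y (g fun _ => 0)
    refine ⟨hcomp, 0, Fin.elim0, fun j => j.elim0, fun θ => ?_⟩
    refine ⟨MvPolynomial.C (f (g fun _ => 0) i), by simp, fun x _ => ?_⟩
    simp [Function.comp, hconst (g x)]
  · -- main case: `k' ≥ 1`
    choose b π hπ using fun j => (hg j).2
    have hπdeg : ∀ j (s : Fin (b j)), (π j s).totalDegree ≤ k := fun j => (hπ j).1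
    set J := (Σ j : Fin m, Fin (b j)) with hJ
    have Hξ : ∀ θ : J → SignType, ∀ j : Fin m,
        ∃ ξ : MvPolynomial (Fin n) ℝ, ξ.totalDegree ≤ k ∧
          ∀ x : Fin n → ℝ,
            (∀ s : J, SignType.sign (MvPolynomial.eval x (π s.1 s.2)) = θ s) →
              g x j = MvPolynomial.eval x ξ := by
      intro θ j
      obtain ⟨ξ, h1, h2⟩ := (hπ j).2 fun i => θ ⟨j, i⟩
      exact ⟨ξ, h1, fun x hx => h2 x fun i => hx ⟨j, i⟩⟩
    choose ξ hξdeg hξ using Hξ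
    refine aux_isSpline_of_index hcomp
      (I := J ⊕ ((J → SignType) × Fin c))
      (Sum.elim (fun s => π s.1 s.2)
        (fun q => MvPolynomial.aeval (ξ q.1) (σ q.2))) ?_ ?_
    · rintro (s | q)
      · calc (π s.1 s.2).totalDegree ≤ k := hπdeg s.1 s.2
          _ = k * 1 := (Nat.mul_one k).symm
          _ ≤ k * k' := Nat.mul_le_mul_left k hk'
      · refine (aux_totalDegree_aeval_le _ (hξdeg q.1) _).trans ?_
        calc (σ q.2).totalDegree * k ≤ k' * k := Nat.mul_le_mul_right k (hσdeg q.2)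
          _ = k * k' := Nat.mul_comm k' k
    · intro Θ
      set θ : J → SignType := fun s => Θ (Sum.inl s) with hθ
      set ψ : Fin c → SignType := fun l => Θ (Sum.inr (θ, l)) with hψ
      obtain ⟨ζ, hζdeg, hζ⟩ := Hf ψ
      refine ⟨MvPolynomial.aeval (ξ θ) ζ, ?_, ?_⟩
      · refine (aux_totalDegree_aeval_le _ (hξdeg θ) _).trans ?_
        calc ζ.totalDegree * k ≤ k' * k := Nat.mul_le_mul_right k hζdeg
          _ = k * k' := Nat.mul_comm k' k
      · intro x hx
        have hgx : g x = fun j => MvPolynomial.eval x (ξ θ j) :=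
          funext fun j => hξ θ j x fun s => hx (Sum.inl s)
        have hsig : ∀ l, SignType.sign (MvPolynomial.eval (g x) (σ l)) = ψ l := by
          intro l
          rw [hgx, ← aux_eval_aeval]
          exact hx (Sum.inr (θ, l))
        calc (f ∘ g) x i = MvPolynomial.eval (g x) ζ := hζ (g x) hsig
          _ = MvPolynomial.eval x (MvPolynomial.aeval (ξ θ) ζ) := by
              rw [aux_eval_aeval, ← hgx]
end
end

section
/- Every ReLU-activated attention module is a cubic spline. That is, for all weight matrices A_Q, A_K ∈ ℝ^{d×n}, A_V ∈ ℝ^{m×n}, and bias matrices B_Q, B_K ∈ ℝ^{d×p}, B_V ∈ ℝ^{m×p}, the map α : ℝ^{n×p} → ℝ^{m×p}, α(X) = (A_V X + B_V) · ReLU((A_K X + B_K)ᵀ (A_Q X + B_Q)), is a matrix-valued spline of degree 3 in the np entries of X. -/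
noncomputable section

open Matrix

/-- The rectified linear unit. -/
def relu (x : ℝ) : ℝ := max x 0

/-- Entrywise ReLU of a matrix. -/
def matRelu {a b : ℕ} (M : Matrix (Fin a) (Fin b) ℝ) : Matrix (Fin a) (Fin b) ℝ :=
  Matrix.of fun i j => relu (M i j)

/-- A matrix-variate, matrix-valued function is a spline of degree `k` if each coordinate
function, regarded as a function of the entries of the input matrix, is a spline of degree `k`. -/
def IsMatrixSpline {n p m q : ℕ} (k : ℕ)
    (f : Matrix (Fin n) (Fin p) ℝ → Matrix (Fin m) (Fin q) ℝ) : Prop :=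
  ∀ (i : Fin m) (j : Fin q),
    IsSpline (Fin n × Fin p) k (fun x => f (Matrix.of fun a b => x (a, b)) i j)

/-- The ReLU-activated attention module `α(X) = (A_V X + B_V) · ReLU((A_K X + B_K)ᵀ (A_Q X + B_Q))`. -/
def attention {n p d m : ℕ}
    (AQ AK : Matrix (Fin d) (Fin n) ℝ) (AV : Matrix (Fin m) (Fin n) ℝ)
    (BQ BK : Matrix (Fin d) (Fin p) ℝ) (BV : Matrix (Fin m) (Fin p) ℝ)
    (X : Matrix (Fin n) (Fin p) ℝ) : Matrix (Fin m) (Fin p) ℝ :=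
  (AV * X + BV) * matRelu ((AK * X + BK)ᵀ * (AQ * X + BQ))

namespace AttnSpline
open MvPolynomial

variable {n p d m : ℕ}

/-- Polynomial for the `(a,b)` entry of `A * X + B`. -/
def lp (A : Matrix (Fin d) (Fin n) ℝ) (B : Matrix (Fin d) (Fin p) ℝ)
    (a : Fin d) (b : Fin p) : MvPolynomial (Fin n × Fin p) ℝ :=
  (∑ t, C (A a t) * X (t, b)) + C (B a b)

lemma lp_eval (A : Matrix (Fin d) (Fin n) ℝ) (B : Matrix (Fin d) (Fin p) ℝ)
    (a : Fin d) (b : Fin p) (x : Fin n × Fin p → ℝ) :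
    eval x (lp A B a b) = (A * (Matrix.of fun a b => x (a, b)) + B) a b := by
  simp [lp, Matrix.add_apply, Matrix.mul_apply]

lemma lp_deg (A : Matrix (Fin d) (Fin n) ℝ) (B : Matrix (Fin d) (Fin p) ℝ)
    (a : Fin d) (b : Fin p) : (lp A B a b).totalDegree ≤ 1 := by
  refine le_trans (totalDegree_add _ _) (max_le ?_ ?_)
  · refine le_trans (totalDegree_finset_sum _ _) (Finset.sup_le fun t _ => ?_)
    refine le_trans (totalDegree_mul _ _) ?_
    simp [totalDegree_X]
  · simp

/-- Polynomial for the `(l,j)` entry of `(AK X + BK)ᵀ (AQ X + BQ)`. -/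
def qp (AQ AK : Matrix (Fin d) (Fin n) ℝ) (BQ BK : Matrix (Fin d) (Fin p) ℝ)
    (l j : Fin p) : MvPolynomial (Fin n × Fin p) ℝ :=
  ∑ t, lp AK BK t l * lp AQ BQ t j

lemma qp_eval (AQ AK : Matrix (Fin d) (Fin n) ℝ) (BQ BK : Matrix (Fin d) (Fin p) ℝ)
    (l j : Fin p) (x : Fin n × Fin p → ℝ) :
    eval x (qp AQ AK BQ BK l j) =
      ((AK * (Matrix.of fun a b => x (a, b)) + BK)ᵀ *
        (AQ * (Matrix.of fun a b => x (a, b)) + BQ)) l j := by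
  simp only [qp, map_sum, _root_.map_mul, lp_eval, Matrix.mul_apply, Matrix.transpose_apply,
    Matrix.add_apply]

lemma qp_deg (AQ AK : Matrix (Fin d) (Fin n) ℝ) (BQ BK : Matrix (Fin d) (Fin p) ℝ)
    (l j : Fin p) : (qp AQ AK BQ BK l j).totalDegree ≤ 2 := by
  refine le_trans (totalDegree_finset_sum _ _) (Finset.sup_le fun t _ => ?_)
  refine le_trans (totalDegree_mul _ _) ?_
  have := lp_deg AK BK t l
  have := lp_deg AQ BQ t j
  omega

end AttnSpline

/-- Every ReLU-activated attention module is a cubic spline. -/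
theorem attention_is_cubic_spline (n p d m : ℕ)
    (AQ AK : Matrix (Fin d) (Fin n) ℝ) (AV : Matrix (Fin m) (Fin n) ℝ)
    (BQ BK : Matrix (Fin d) (Fin p) ℝ) (BV : Matrix (Fin m) (Fin p) ℝ) :
    IsMatrixSpline 3 (attention AQ AK AV BQ BK BV) := by
  intro i j
  open AttnSpline MvPolynomial in
  -- notation for the matrix built from the coordinates
  set Mx : (Fin n × Fin p → ℝ) → Matrix (Fin n) (Fin p) ℝ :=
    fun x => Matrix.of fun a b => x (a, b) with hMx
  have hentry : ∀ x : Fin n × Fin p → ℝ,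
      attention AQ AK AV BQ BK BV (Mx x) i j =
      ∑ l, (AV * Mx x + BV) i l * relu (((AK * Mx x + BK)ᵀ * (AQ * Mx x + BQ)) l j) := by
    intro x
    simp [attention, Matrix.mul_apply, matRelu]
  constructor
  · -- continuity
    have hc : ∀ a b, Continuous fun x : Fin n × Fin p → ℝ => Mx x a b := by
      intro a b; simpa [hMx] using continuous_apply (a, b)
    have hlin : ∀ (k : ℕ) (A : Matrix (Fin k) (Fin n) ℝ) (B : Matrix (Fin k) (Fin p) ℝ)
        (a : Fin k) (b : Fin p),
        Continuous fun x : Fin n × Fin p → ℝ => (A * Mx x + B) a b := by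
      intro k A B a b
      simp only [Matrix.add_apply, Matrix.mul_apply]
      exact ((continuous_finset_sum _ fun t _ => (continuous_const.mul (hc t b))).add
        continuous_const)
    have : Continuous fun x : Fin n × Fin p → ℝ =>
        ∑ l, (AV * Mx x + BV) i l * relu (((AK * Mx x + BK)ᵀ * (AQ * Mx x + BQ)) l j) := by
      refine continuous_finset_sum _ fun l _ => (hlin m AV BV i l).mul ?_
      have hq : Continuous fun x : Fin n × Fin p → ℝ =>
          ((AK * Mx x + BK)ᵀ * (AQ * Mx x + BQ)) l j := by
        simp only [Matrix.mul_apply, Matrix.transpose_apply]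
        exact continuous_finset_sum _ fun t _ => (hlin d AK BK t l).mul (hlin d AQ BQ t j)
      exact (hq.max continuous_const)
    exact this.congr fun x => (hentry x).symm
  · -- the spline structure
    refine ⟨p, fun l => AttnSpline.qp AQ AK BQ BK l j, fun l => le_trans (AttnSpline.qp_deg _ _ _ _ _ _) (by norm_num), ?_⟩
    intro θ
    refine ⟨∑ l ∈ Finset.univ.filter (fun l => θ l ≠ SignType.neg),
      AttnSpline.lp AV BV i l * AttnSpline.qp AQ AK BQ BK l j, ?_, ?_⟩
    · refine le_trans (totalDegree_finset_sum _ _) (Finset.sup_le fun l _ => ?_)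
      refine le_trans (totalDegree_mul _ _) ?_
      have := AttnSpline.lp_deg AV BV i l
      have := AttnSpline.qp_deg AQ AK BQ BK l j
      omega
    · intro x hx
      show attention AQ AK AV BQ BK BV (Mx x) i j = _
      rw [hentry x]
      rw [map_sum]
      rw [← Finset.sum_filter_add_sum_filter_not Finset.univ (fun l => θ l ≠ SignType.neg)]
      have h2 : ∑ l ∈ Finset.univ.filter (fun l => ¬ θ l ≠ SignType.neg),
          (AV * Mx x + BV) i l * relu (((AK * Mx x + BK)ᵀ * (AQ * Mx x + BQ)) l j) = 0 := by
        refine Finset.sum_eq_zero fun l hl => ?_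
        simp only [Finset.mem_filter, not_not] at hl
        have hsign := hx l
        rw [hl.2] at hsign
        have hneg : MvPolynomial.eval x (AttnSpline.qp AQ AK BQ BK l j) < 0 := by
          rwa [← sign_eq_neg_one_iff (a := MvPolynomial.eval x (AttnSpline.qp AQ AK BQ BK l j))]
        rw [AttnSpline.qp_eval] at hneg
        have : relu (((AK * Mx x + BK)ᵀ * (AQ * Mx x + BQ)) l j) = 0 := by
          simp only [relu]; exact max_eq_right hneg.le
        rw [this, mul_zero]
      rw [h2, add_zero]
      refine Finset.sum_congr rfl fun l hl => ?_
      simp only [Finset.mem_filter] at hl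
      have hsign := hx l
      have hnonneg : 0 ≤ MvPolynomial.eval x (AttnSpline.qp AQ AK BQ BK l j) := by
        by_contra h
        push_neg at h
        rw [sign_eq_neg_one_iff.mpr h] at hsign
        exact hl.2 hsign.symm
      rw [_root_.map_mul, AttnSpline.lp_eval, AttnSpline.qp_eval]
      rw [AttnSpline.qp_eval] at hnonneg
      simp only [relu]
      rw [max_eq_left hnonneg]
end
end

section
/- Every ReLU-activated masked attention module is a cubic spline. That is, for all weight matrices A_Q, A_K ∈ ℝ^{d×n}, A_V ∈ ℝ^{m×n}, and bias matrices B_Q, B_K ∈ ℝ^{d×p}, B_V ∈ ℝ^{m×p}, the map β : ℝ^{n×p} → ℝ^{m×p}, β(X) = (A_V X + B_V) · M(X), where M(X) ∈ ℝ^{p×p} has entries M(X)_{ij} = ReLU(((A_K X + B_K)ᵀ(A_Q X + B_Q))_{ij}) for i ≤ j and M(X)_{ij} = 0 for i > j, is a matrix-valued spline of degree 3 in the np entries of X. -/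
noncomputable section

open Matrix

/-- The ReLU-activated masked attention module: the score matrix
`(A_K X + B_K)ᵀ (A_Q X + B_Q)` is ReLU'd on its upper-triangular part (`i ≤ j`) and the
strictly lower-triangular entries (`i > j`) are set to `0`, before multiplying by the values. -/
def maskedAttention {n p d m : ℕ}
    (AQ AK : Matrix (Fin d) (Fin n) ℝ) (AV : Matrix (Fin m) (Fin n) ℝ)
    (BQ BK : Matrix (Fin d) (Fin p) ℝ) (BV : Matrix (Fin m) (Fin p) ℝ)
    (X : Matrix (Fin n) (Fin p) ℝ) : Matrix (Fin m) (Fin p) ℝ :=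
  (AV * X + BV) *
    Matrix.of (fun i j : Fin p =>
      if i ≤ j then relu (((AK * X + BK)ᵀ * (AQ * X + BQ)) i j) else 0)

lemma continuous_relu : Continuous relu := continuous_id.max continuous_const

/-- polynomial for `(A * X + B) a b` -/
def linP {n p d : ℕ} (A : Matrix (Fin d) (Fin n) ℝ) (B : Matrix (Fin d) (Fin p) ℝ)
    (a : Fin d) (b : Fin p) : MvPolynomial (Fin n × Fin p) ℝ :=
  (∑ t, MvPolynomial.C (A a t) * MvPolynomial.X (t, b)) + MvPolynomial.C (B a b)

lemma linP_deg {n p d : ℕ} (A : Matrix (Fin d) (Fin n) ℝ) (B : Matrix (Fin d) (Fin p) ℝ)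
    (a : Fin d) (b : Fin p) : (linP A B a b).totalDegree ≤ 1 := by
  refine le_trans (MvPolynomial.totalDegree_add _ _) (max_le ?_ ?_)
  · refine le_trans (MvPolynomial.totalDegree_finset_sum _ _) ?_
    apply Finset.sup_le
    intro t _
    refine le_trans (MvPolynomial.totalDegree_mul _ _) ?_
    simp [MvPolynomial.totalDegree_C, MvPolynomial.totalDegree_X]
  · simp [MvPolynomial.totalDegree_C]

lemma linP_eval {n p d : ℕ} (A : Matrix (Fin d) (Fin n) ℝ) (B : Matrix (Fin d) (Fin p) ℝ)
    (a : Fin d) (b : Fin p) (x : Fin n × Fin p → ℝ) :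
    MvPolynomial.eval x (linP A B a b) =
      (A * (Matrix.of fun u v => x (u, v)) + B) a b := by
  simp [linP, Matrix.add_apply, Matrix.mul_apply]

def quadP {n p d : ℕ} (AK AQ : Matrix (Fin d) (Fin n) ℝ) (BK BQ : Matrix (Fin d) (Fin p) ℝ)
    (a b : Fin p) : MvPolynomial (Fin n × Fin p) ℝ :=
  ∑ t, linP AK BK t a * linP AQ BQ t b

lemma quadP_deg {n p d : ℕ} (AK AQ : Matrix (Fin d) (Fin n) ℝ) (BK BQ : Matrix (Fin d) (Fin p) ℝ)
    (a b : Fin p) : (quadP AK AQ BK BQ a b).totalDegree ≤ 2 := by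
  refine le_trans (MvPolynomial.totalDegree_finset_sum _ _) ?_
  apply Finset.sup_le
  intro t _
  refine le_trans (MvPolynomial.totalDegree_mul _ _) ?_
  have := linP_deg AK BK t a
  have := linP_deg AQ BQ t b
  omega

lemma quadP_eval {n p d : ℕ} (AK AQ : Matrix (Fin d) (Fin n) ℝ) (BK BQ : Matrix (Fin d) (Fin p) ℝ)
    (a b : Fin p) (x : Fin n × Fin p → ℝ) :
    MvPolynomial.eval x (quadP AK AQ BK BQ a b) =
      (((AK * (Matrix.of fun u v => x (u, v)) + BK))ᵀ *
        (AQ * (Matrix.of fun u v => x (u, v)) + BQ)) a b := by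
  simp [quadP, Matrix.mul_apply, Matrix.transpose_apply, linP_eval, mul_comm]


/-- Every ReLU-activated masked attention module is a cubic spline. -/
theorem masked_attention_is_cubic_spline (n p d m : ℕ)
    (AQ AK : Matrix (Fin d) (Fin n) ℝ) (AV : Matrix (Fin m) (Fin n) ℝ)
    (BQ BK : Matrix (Fin d) (Fin p) ℝ) (BV : Matrix (Fin m) (Fin p) ℝ) :
    IsMatrixSpline 3 (maskedAttention AQ AK AV BQ BK BV) := by
  intro i j
  constructor
  · -- continuity
    simp only [maskedAttention, Matrix.mul_apply, Matrix.add_apply, Matrix.of_apply,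
      Matrix.transpose_apply]
    apply continuous_finset_sum
    intro k _
    apply Continuous.mul
    · fun_prop
    · by_cases hkj : k ≤ j
      · simp only [if_pos hkj]
        exact continuous_relu.comp (by fun_prop)
      · simp only [if_neg hkj]
        exact continuous_const
  · refine ⟨p, fun k => quadP AK AQ BK BQ k j, fun k => le_trans (quadP_deg _ _ _ _ _ _) (by omega), ?_⟩
    intro θ
    refine ⟨∑ k : Fin p, if k ≤ j ∧ θ k = 1 then linP AV BV i k * quadP AK AQ BK BQ k j
      else 0, ?_, ?_⟩
    · refine le_trans (MvPolynomial.totalDegree_finset_sum _ _) ?_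
      apply Finset.sup_le
      intro k _
      split_ifs
      · refine le_trans (MvPolynomial.totalDegree_mul _ _) ?_
        have := linP_deg AV BV i k
        have := quadP_deg AK AQ BK BQ k j
        omega
      · simp
    · intro x hx
      simp only [maskedAttention, Matrix.mul_apply (N := Matrix.of _), Matrix.of_apply, map_sum]
      apply Finset.sum_congr rfl
      intro k _
      rw [apply_ite (MvPolynomial.eval x), _root_.map_mul, map_zero, linP_eval, quadP_eval]
      have hsq := hx k
      by_cases hkj : k ≤ j
      · rcases hθ : θ k with _ | _ | _
        · -- zero
          rw [hθ] at hsq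
          rw [show SignType.zero = 0 from rfl, sign_eq_zero_iff] at hsq
          rw [quadP_eval] at hsq
          rw [if_pos hkj, if_neg (by simp [hθ]), hsq]
          simp [relu]
        · -- neg
          rw [hθ] at hsq
          rw [show SignType.neg = -1 from rfl, sign_eq_neg_one_iff] at hsq
          rw [quadP_eval] at hsq
          rw [if_pos hkj, if_neg (by simp [hθ])]
          simp only [relu]
          rw [max_eq_right hsq.le, mul_zero]
        · -- pos
          rw [hθ] at hsq
          rw [show SignType.pos = 1 from rfl, sign_eq_one_iff] at hsq
          rw [quadP_eval] at hsq
          rw [if_pos hkj, if_pos ⟨hkj, rfl⟩]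
          simp only [relu]
          rw [max_eq_left hsq.le]
      · rw [if_neg hkj, if_neg (by simp [hkj]), mul_zero]
end
end

section
/- Every ReLU-activated encoder–decoder attention module is a cubic spline. That is, for all weight matrices A_Q ∈ ℝ^{d×r}, A_K ∈ ℝ^{d×n}, A_V ∈ ℝ^{m×n}, and bias matrices B_Q, B_K ∈ ℝ^{d×p}, B_V ∈ ℝ^{m×p}, the map γ : ℝ^{n×p} × ℝ^{r×p} → ℝ^{m×p}, γ(X,Y) = (A_V X + B_V) · ReLU((A_K X + B_K)ᵀ(A_Q Y + B_Q)), is a spline of degree 3 in the np + rp entries of (X, Y); moreover, for fixed Y it is a spline of degree 2 in X, and for fixed X it is a spline of degree 1 in Y. -/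
noncomputable section

open Matrix

/-- A function of a pair of matrices is a spline of degree `k` (jointly in the entries of both
arguments) if each coordinate function, regarded as a function of the `np + rp'` entries of the
two input matrices, is a spline of degree `k`. -/
def IsPairSpline {n p r p' m q : ℕ} (k : ℕ)
    (f : Matrix (Fin n) (Fin p) ℝ → Matrix (Fin r) (Fin p') ℝ → Matrix (Fin m) (Fin q) ℝ) :
    Prop :=
  ∀ (i : Fin m) (j : Fin q),
    IsSpline ((Fin n × Fin p) ⊕ (Fin r × Fin p')) k
      (fun x => f (Matrix.of fun a b => x (Sum.inl (a, b)))
                  (Matrix.of fun a b => x (Sum.inr (a, b))) i j)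

/-- The ReLU-activated encoder–decoder attention module: keys and values come from `X`, queries
come from `Y`: `γ(X,Y) = (A_V X + B_V) · ReLU((A_K X + B_K)ᵀ (A_Q Y + B_Q))`. -/
def encDecAttention {n r p d m : ℕ}
    (AQ : Matrix (Fin d) (Fin r) ℝ) (AK : Matrix (Fin d) (Fin n) ℝ)
    (AV : Matrix (Fin m) (Fin n) ℝ)
    (BQ BK : Matrix (Fin d) (Fin p) ℝ) (BV : Matrix (Fin m) (Fin p) ℝ)
    (X : Matrix (Fin n) (Fin p) ℝ) (Y : Matrix (Fin r) (Fin p) ℝ) :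
    Matrix (Fin m) (Fin p) ℝ :=
  (AV * X + BV) * matRelu ((AK * X + BK)ᵀ * (AQ * Y + BQ))

/-- An affine polynomial with coefficients `c`, variables `v`, constant term `c0`. -/
def aff {ι α : Type} [Fintype α] (c : α → ℝ) (v : α → ι) (c0 : ℝ) : MvPolynomial ι ℝ :=
  (∑ a, MvPolynomial.C (c a) * MvPolynomial.X (v a)) + MvPolynomial.C c0

lemma aff_eval {ι α : Type} [Fintype α] (c : α → ℝ) (v : α → ι) (c0 : ℝ) (x : ι → ℝ) :
    MvPolynomial.eval x (aff c v c0) = (∑ a, c a * x (v a)) + c0 := by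
  simp [aff]

lemma aff_degree {ι α : Type} [Fintype α] (c : α → ℝ) (v : α → ι) (c0 : ℝ) :
    (aff c v c0).totalDegree ≤ 1 := by
  refine le_trans (MvPolynomial.totalDegree_add _ _) (max_le ?_ ?_)
  · refine le_trans (MvPolynomial.totalDegree_finset_sum _ _) (Finset.sup_le fun a _ => ?_)
    refine le_trans (MvPolynomial.totalDegree_mul _ _) ?_
    simp [MvPolynomial.totalDegree_X]
  · simp

lemma isSpline_sum_relu {ι : Type} [Fintype ι] (k k1 k2 c : ℕ)
    (P Q : Fin c → MvPolynomial ι ℝ)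
    (hP : ∀ l, (P l).totalDegree ≤ k1) (hQ : ∀ l, (Q l).totalDegree ≤ k2)
    (hk : k1 + k2 ≤ k) :
    IsSpline ι k
      (fun x => ∑ l, MvPolynomial.eval x (P l) * relu (MvPolynomial.eval x (Q l))) := by
  constructor
  · exact continuous_finset_sum _ fun l _ =>
      (MvPolynomial.continuous_eval (P l)).mul
        (continuous_relu.comp (MvPolynomial.continuous_eval (Q l)))
  · refine ⟨c, Q, fun l => le_trans (hQ l) (le_trans (Nat.le_add_left _ _) hk), fun θ => ?_⟩
    refine ⟨∑ l, if θ l = 1 then P l * Q l else 0, ?_, ?_⟩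
    · refine le_trans (MvPolynomial.totalDegree_finset_sum _ _) (Finset.sup_le fun l _ => ?_)
      split
      · exact le_trans (MvPolynomial.totalDegree_mul _ _)
          (le_trans (Nat.add_le_add (hP l) (hQ l)) hk)
      · simp
    · intro x hx
      rw [map_sum]
      refine Finset.sum_congr rfl fun l _ => ?_
      have h := hx l
      cases hθ : θ l with
      | zero =>
        rw [hθ] at h
        have h0 := sign_eq_zero_iff.mp h
        simp [relu, h0]
      | neg =>
        rw [hθ] at h
        have h0 := sign_eq_neg_one_iff.mp h
        simp [relu, max_eq_right h0.le]
      | pos =>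
        rw [hθ] at h
        have h0 := sign_eq_one_iff.mp h
        simp [relu, max_eq_left h0.le]

set_option maxHeartbeats 1000000 in
/-- Every ReLU-activated encoder–decoder attention module is a cubic spline in the joint
variables `(X, Y)`; moreover, for each fixed `Y` it is a quadratic spline in `X`, and for each
fixed `X` it is a linear spline in `Y`. -/
theorem encdec_attention_is_cubic_spline (n r p d m : ℕ)
    (AQ : Matrix (Fin d) (Fin r) ℝ) (AK : Matrix (Fin d) (Fin n) ℝ)
    (AV : Matrix (Fin m) (Fin n) ℝ)
    (BQ BK : Matrix (Fin d) (Fin p) ℝ) (BV : Matrix (Fin m) (Fin p) ℝ) :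
    IsPairSpline 3 (encDecAttention AQ AK AV BQ BK BV) ∧
    (∀ Y : Matrix (Fin r) (Fin p) ℝ,
      IsMatrixSpline 2 (fun X => encDecAttention AQ AK AV BQ BK BV X Y)) ∧
    (∀ X : Matrix (Fin n) (Fin p) ℝ,
      IsMatrixSpline 1 (encDecAttention AQ AK AV BQ BK BV X)) := by
  refine ⟨?_, ?_, ?_⟩
  · intro i j
    have heq : (fun x : ((Fin n × Fin p) ⊕ (Fin r × Fin p)) → ℝ =>
        encDecAttention AQ AK AV BQ BK BV (Matrix.of fun a b => x (Sum.inl (a, b)))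
          (Matrix.of fun a b => x (Sum.inr (a, b))) i j)
        = fun x => ∑ l : Fin p,
            MvPolynomial.eval x (aff (fun a => AV i a) (fun a => Sum.inl (a, l)) (BV i l)) *
            relu (MvPolynomial.eval x (∑ e : Fin d,
              aff (fun a => AK e a) (fun a => Sum.inl (a, l)) (BK e l) *
              aff (fun a => AQ e a) (fun a => Sum.inr (a, j)) (BQ e j))) := by
      funext x
      simp [encDecAttention, Matrix.mul_apply, Matrix.add_apply, matRelu, aff_eval,
        Matrix.transpose_apply, map_sum, mul_comm]
    rw [heq]
    refine isSpline_sum_relu 3 1 2 p _ _ (fun l => aff_degree _ _ _) (fun l => ?_) (by norm_num)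
    refine le_trans (MvPolynomial.totalDegree_finset_sum _ _) (Finset.sup_le fun e _ => ?_)
    exact le_trans (MvPolynomial.totalDegree_mul _ _)
      (Nat.add_le_add (aff_degree _ _ _) (aff_degree _ _ _))
  · intro Y i j
    have heq : (fun x : (Fin n × Fin p) → ℝ =>
        encDecAttention AQ AK AV BQ BK BV (Matrix.of fun a b => x (a, b)) Y i j)
        = fun x => ∑ l : Fin p,
            MvPolynomial.eval x (aff (fun a => AV i a) (fun a => (a, l)) (BV i l)) *
            relu (MvPolynomial.eval x (∑ e : Fin d,
              aff (fun a => AK e a) (fun a => (a, l)) (BK e l) *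
              MvPolynomial.C ((AQ * Y + BQ) e j))) := by
      funext x
      simp [encDecAttention, Matrix.mul_apply, Matrix.add_apply, matRelu, aff_eval,
        Matrix.transpose_apply, map_sum, mul_comm]
    rw [heq]
    refine isSpline_sum_relu 2 1 1 p _ _ (fun l => aff_degree _ _ _) (fun l => ?_) (by norm_num)
    refine le_trans (MvPolynomial.totalDegree_finset_sum _ _) (Finset.sup_le fun e _ => ?_)
    refine le_trans (MvPolynomial.totalDegree_mul _ _) ?_
    exact le_trans (Nat.add_le_add (aff_degree _ _ _)
      (le_of_eq (MvPolynomial.totalDegree_C _))) (by norm_num)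
  · intro X i j
    have heq : (fun x : (Fin r × Fin p) → ℝ =>
        encDecAttention AQ AK AV BQ BK BV X (Matrix.of fun a b => x (a, b)) i j)
        = fun x => ∑ l : Fin p,
            MvPolynomial.eval x (MvPolynomial.C ((AV * X + BV) i l)) *
            relu (MvPolynomial.eval x (∑ e : Fin d,
              MvPolynomial.C ((AK * X + BK) e l) *
              aff (fun a => AQ e a) (fun a => (a, j)) (BQ e j))) := by
      funext x
      simp [encDecAttention, Matrix.mul_apply, Matrix.add_apply, matRelu, aff_eval,
        Matrix.transpose_apply, map_sum, mul_comm]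
    rw [heq]
    refine isSpline_sum_relu 1 0 1 p _ _ (fun l => (MvPolynomial.totalDegree_C _).le) (fun l => ?_) (by norm_num)
    refine le_trans (MvPolynomial.totalDegree_finset_sum _ _) (Finset.sup_le fun e _ => ?_)
    refine le_trans (MvPolynomial.totalDegree_mul _ _) ?_
    exact le_trans (Nat.add_le_add (le_of_eq (MvPolynomial.totalDegree_C _))
      (aff_degree _ _ _)) (by norm_num)
end
end

section
/- Every ReLU-activated encoder–decoder block is a quintic spline: the map τ : ℝ^{n×p} × ℝ^{r×p} → ℝ^{n'×p}, τ(X,Y) = φ(γ(X, β(Y))), where β is a multihead ReLU masked attention module, γ is a multihead ReLU encoder–decoder attention module, and φ is a ReLU feed-forward neural network applied columnwise, is a spline of degree 5 in the joint variables (X,Y); moreover it is a spline of degree 2 in X for fixed Y and of degree 3 in Y for fixed X. -/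
noncomputable section

open Matrix

/-- An `h`-headed ReLU masked attention module: `h` masked attention modules stacked
vertically, giving a map `ℝ^{n×p} → ℝ^{hm×p}`. -/
def multiheadMaskedAttention {n p d m h : ℕ}
    (AQ AK : Fin h → Matrix (Fin d) (Fin n) ℝ) (AV : Fin h → Matrix (Fin m) (Fin n) ℝ)
    (BQ BK : Fin h → Matrix (Fin d) (Fin p) ℝ) (BV : Fin h → Matrix (Fin m) (Fin p) ℝ)
    (X : Matrix (Fin n) (Fin p) ℝ) : Matrix (Fin (h * m)) (Fin p) ℝ :=
  Matrix.of fun i j =>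
    maskedAttention (AQ (finProdFinEquiv.symm i).1) (AK (finProdFinEquiv.symm i).1)
      (AV (finProdFinEquiv.symm i).1) (BQ (finProdFinEquiv.symm i).1)
      (BK (finProdFinEquiv.symm i).1) (BV (finProdFinEquiv.symm i).1) X
      (finProdFinEquiv.symm i).2 j

/-- An `h`-headed ReLU encoder–decoder attention module: `h` encoder–decoder attention modules
stacked vertically (keys and values from `X`, queries from `Z`). -/
def multiheadEncDecAttention {n r p d m h : ℕ}
    (AQ : Fin h → Matrix (Fin d) (Fin r) ℝ) (AK : Fin h → Matrix (Fin d) (Fin n) ℝ)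
    (AV : Fin h → Matrix (Fin m) (Fin n) ℝ)
    (BQ BK : Fin h → Matrix (Fin d) (Fin p) ℝ) (BV : Fin h → Matrix (Fin m) (Fin p) ℝ)
    (X : Matrix (Fin n) (Fin p) ℝ) (Z : Matrix (Fin r) (Fin p) ℝ) :
    Matrix (Fin (h * m)) (Fin p) ℝ :=
  Matrix.of fun i j =>
    encDecAttention (AQ (finProdFinEquiv.symm i).1) (AK (finProdFinEquiv.symm i).1)
      (AV (finProdFinEquiv.symm i).1) (BQ (finProdFinEquiv.symm i).1)
      (BK (finProdFinEquiv.symm i).1) (BV (finProdFinEquiv.symm i).1) X Z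
      (finProdFinEquiv.symm i).2 j

/-- ReLU feed-forward neural networks `φ(x) = A_{l+1} σ_l A_l ⋯ σ_1 A_1 x + b_{l+1}`, where
`σ_i(x) = ReLU(x + b_i)` coordinatewise: the base case is an affine map, and each additional
layer precomposes with `x ↦ ReLU(A x + b)`. -/
inductive IsNN : ∀ {a b : ℕ}, ((Fin a → ℝ) → (Fin b → ℝ)) → Prop
  | affine {a b : ℕ} (A : Matrix (Fin b) (Fin a) ℝ) (c : Fin b → ℝ) :
      IsNN (fun x => A.mulVec x + c)
  | layer {a b c : ℕ} (A : Matrix (Fin b) (Fin a) ℝ) (v : Fin b → ℝ)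
      {g : (Fin b → ℝ) → (Fin c → ℝ)} (hg : IsNN g) :
      IsNN (fun x => g (fun i => relu (A.mulVec x i + v i)))

/-- Apply a map `φ : ℝ^a → ℝ^c` columnwise to a matrix `X ∈ ℝ^{a×p}`. -/
def colwise {a c p : ℕ} (φ : (Fin a → ℝ) → (Fin c → ℝ))
    (X : Matrix (Fin a) (Fin p) ℝ) : Matrix (Fin c) (Fin p) ℝ :=
  Matrix.of fun i j => φ (fun r => X r j) i

variable {ι : Type} [Fintype ι] {k l : ℕ} {f g : (ι → ℝ) → ℝ}

theorem IsSpline.mono (hf : IsSpline ι k f) (hkl : k ≤ l) : IsSpline ι l f := by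
  obtain ⟨hc, b, π, hdeg, H⟩ := hf
  refine ⟨hc, b, π, fun i => (hdeg i).trans hkl, fun θ => ?_⟩
  obtain ⟨ξ, hξd, hξ⟩ := H θ
  exact ⟨ξ, hξd.trans hkl, hξ⟩

theorem isSpline_const (c : ℝ) : IsSpline ι k (fun _ => c) := by
  refine ⟨continuous_const, 0, Fin.elim0, fun i => i.elim0, fun θ => ?_⟩
  refine ⟨MvPolynomial.C c, by simp [MvPolynomial.totalDegree_C], fun x _ => by simp⟩

theorem isSpline_X (i0 : ι) : IsSpline ι 1 (fun x => x i0) := by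
  refine ⟨continuous_apply i0, 0, Fin.elim0, fun i => i.elim0, fun θ => ?_⟩
  exact ⟨MvPolynomial.X i0, le_of_eq (MvPolynomial.totalDegree_X i0), fun x _ => by simp⟩

theorem IsSpline.add (hf : IsSpline ι k f) (hg : IsSpline ι k g) :
    IsSpline ι k (fun x => f x + g x) := by
  obtain ⟨hcf, b1, π1, hd1, H1⟩ := hf
  obtain ⟨hcg, b2, π2, hd2, H2⟩ := hg
  refine ⟨hcf.add hcg, b1 + b2, Fin.append π1 π2, fun i => ?_, fun θ => ?_⟩
  · refine Fin.addCases (fun j => ?_) (fun j => ?_) i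
    · simpa using hd1 j
    · simpa using hd2 j
  · obtain ⟨ξ1, hξ1d, hξ1⟩ := H1 (fun i => θ (Fin.castAdd b2 i))
    obtain ⟨ξ2, hξ2d, hξ2⟩ := H2 (fun i => θ (Fin.natAdd b1 i))
    refine ⟨ξ1 + ξ2, (MvPolynomial.totalDegree_add ξ1 ξ2).trans (max_le hξ1d hξ2d),
      fun x hx => ?_⟩
    show f x + g x = _
    rw [map_add, hξ1 x fun i => by simpa using hx (Fin.castAdd b2 i),
      hξ2 x fun i => by simpa using hx (Fin.natAdd b1 i)]

theorem IsSpline.mul (hf : IsSpline ι k f) (hg : IsSpline ι l g) :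
    IsSpline ι (k + l) (fun x => f x * g x) := by
  obtain ⟨hcf, b1, π1, hd1, H1⟩ := hf
  obtain ⟨hcg, b2, π2, hd2, H2⟩ := hg
  refine ⟨hcf.mul hcg, b1 + b2, Fin.append π1 π2, fun i => ?_, fun θ => ?_⟩
  · refine Fin.addCases (fun j => ?_) (fun j => ?_) i
    · simpa using (hd1 j).trans (Nat.le_add_right k l)
    · simpa using (hd2 j).trans (Nat.le_add_left l k)
  · obtain ⟨ξ1, hξ1d, hξ1⟩ := H1 (fun i => θ (Fin.castAdd b2 i))
    obtain ⟨ξ2, hξ2d, hξ2⟩ := H2 (fun i => θ (Fin.natAdd b1 i))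
    refine ⟨ξ1 * ξ2, (MvPolynomial.totalDegree_mul ξ1 ξ2).trans (add_le_add hξ1d hξ2d),
      fun x hx => ?_⟩
    show f x * g x = _
    rw [_root_.map_mul, hξ1 x fun i => by simpa using hx (Fin.castAdd b2 i),
      hξ2 x fun i => by simpa using hx (Fin.natAdd b1 i)]

theorem IsSpline.relu (hf : IsSpline ι k f) : IsSpline ι k (fun x => relu (f x)) := by
  obtain ⟨hcf, b, π, hd, H⟩ := hf
  choose ξ hξd hξ using H
  let e : (Fin b → SignType) ≃ Fin (Fintype.card (Fin b → SignType)) := Fintype.equivFin _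
  refine ⟨hcf.max continuous_const, b + Fintype.card (Fin b → SignType),
    Fin.append π (fun j => ξ (e.symm j)), fun i => ?_, fun θ => ?_⟩
  · refine Fin.addCases (fun j => ?_) (fun j => ?_) i
    · simpa using hd j
    · simpa using hξd (e.symm j)
  · set θ0 : Fin b → SignType := fun i => θ (Fin.castAdd _ i) with hθ0
    refine ⟨if θ (Fin.natAdd b (e θ0)) = SignType.neg then 0 else ξ θ0, ?_, fun x hx => ?_⟩
    · split
      · simp
      · exact hξd θ0
    · have hfx : f x = MvPolynomial.eval x (ξ θ0) :=
        hξ θ0 x fun i => by simpa using hx (Fin.castAdd _ i)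
      have hsign : SignType.sign (MvPolynomial.eval x (ξ θ0)) = θ (Fin.natAdd b (e θ0)) := by
        have := hx (Fin.natAdd b (e θ0))
        simpa using this
      have hneg : ((-1 : SignType) = SignType.neg) := rfl
      have hpos : ((1 : SignType) = SignType.pos) := rfl
      have h0' : ((0 : SignType) = SignType.zero) := rfl
      show _root_.relu (f x) = _
      rcases h : θ (Fin.natAdd b (e θ0)) with _ | _ | _
      · -- zero
        rw [h, ← h0'] at hsign
        have hz : MvPolynomial.eval x (ξ θ0) = 0 := sign_eq_zero_iff.mp hsign
        rw [if_neg (by decide), hfx, hz]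
        simp [_root_.relu]
      · -- neg
        rw [h, ← hneg] at hsign
        have hlt : MvPolynomial.eval x (ξ θ0) < 0 := sign_eq_neg_one_iff.mp hsign
        rw [if_pos rfl, hfx]
        simp [_root_.relu, max_eq_right hlt.le]
      · -- pos
        rw [h, ← hpos] at hsign
        have hgt : 0 < MvPolynomial.eval x (ξ θ0) := sign_eq_one_iff.mp hsign
        rw [if_neg (by decide), hfx]
        simp [_root_.relu, max_eq_left hgt.le]

theorem IsSpline.congr {f g : (ι → ℝ) → ℝ} (hf : IsSpline ι k f) (h : ∀ x, f x = g x) :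
    IsSpline ι k g := by
  have : f = g := funext h
  rwa [← this]

theorem isSpline_sum {α : Type*} (s : Finset α) (F : α → (ι → ℝ) → ℝ)
    (h : ∀ a ∈ s, IsSpline ι k (F a)) :
    IsSpline ι k (fun x => ∑ a ∈ s, F a x) := by
  classical
  induction s using Finset.induction_on with
  | empty => exact (isSpline_const 0).congr (by simp)
  | @insert a s hni ih =>
    exact (((h a (Finset.mem_insert_self a s)).add
      (ih fun b hb => h b (Finset.mem_insert_of_mem hb))).congr
      (fun x => by rw [Finset.sum_insert hni]))

theorem IsSpline.const_mul (hf : IsSpline ι k f) (c : ℝ) :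
    IsSpline ι k (fun x => c * f x) :=
  (((isSpline_const (k := 0) c).mul hf).mono (by omega)).congr (fun x => rfl)

theorem IsSpline.add_const (hf : IsSpline ι k f) (c : ℝ) :
    IsSpline ι k (fun x => f x + c) :=
  hf.add (isSpline_const c)

theorem isSpline_comp_nn {a b : ℕ} {g : (Fin a → ℝ) → (Fin b → ℝ)} (hg : IsNN g) :
    ∀ {f : (ι → ℝ) → Fin a → ℝ}, (∀ j, IsSpline ι k (fun x => f x j)) →
      ∀ i, IsSpline ι k (fun x => g (f x) i) := by
  induction hg with
  | affine A c =>
    intro f hf i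
    refine (((isSpline_sum Finset.univ (fun j x => A i j * f x j)
      (fun j _ => (hf j).const_mul (A i j))).add_const (c i)).congr (fun x => ?_))
    simp [Matrix.mulVec, dotProduct]
  | layer A v hg ih =>
    intro f hf i
    exact ih (fun j => (((isSpline_sum Finset.univ (fun t x => A j t * f x t)
      (fun t _ => (hf t).const_mul (A j t))).add_const (v j)).congr
        (fun x => by simp [Matrix.mulVec, dotProduct])).relu) i

/-- All entries of a matrix-valued map are splines of degree `k`. -/
def EntriesSpline {m q : ℕ} (k : ℕ) (M : (ι → ℝ) → Matrix (Fin m) (Fin q) ℝ) : Prop :=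
  ∀ i j, IsSpline ι k (fun x => M x i j)

theorem EntriesSpline.mono {m q : ℕ} {M : (ι → ℝ) → Matrix (Fin m) (Fin q) ℝ}
    (h : EntriesSpline k M) (hkl : k ≤ l) : EntriesSpline l M :=
  fun i j => (h i j).mono hkl

theorem EntriesSpline.affine {m q s : ℕ} {M : (ι → ℝ) → Matrix (Fin s) (Fin q) ℝ}
    (h : EntriesSpline k M) (A : Matrix (Fin m) (Fin s) ℝ) (B : Matrix (Fin m) (Fin q) ℝ) :
    EntriesSpline k (fun x => A * M x + B) := by
  intro i j
  refine ((isSpline_sum Finset.univ (fun t x => A i t * M x t j)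
    (fun t _ => (h t j).const_mul (A i t))).add_const (B i j)).congr (fun x => ?_)
  simp [Matrix.mul_apply, Matrix.add_apply]

theorem EntriesSpline.encDec {n r p d m : ℕ} {a c : ℕ}
    (AQ : Matrix (Fin d) (Fin r) ℝ) (AK : Matrix (Fin d) (Fin n) ℝ)
    (AV : Matrix (Fin m) (Fin n) ℝ)
    (BQ BK : Matrix (Fin d) (Fin p) ℝ) (BV : Matrix (Fin m) (Fin p) ℝ)
    {X : (ι → ℝ) → Matrix (Fin n) (Fin p) ℝ} {Z : (ι → ℝ) → Matrix (Fin r) (Fin p) ℝ}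
    (hX : EntriesSpline a X) (hZ : EntriesSpline c Z) :
    EntriesSpline (a + (a + c)) (fun x => encDecAttention AQ AK AV BQ BK BV (X x) (Z x)) := by
  intro i j
  have hV := hX.affine AV BV
  have hK := hX.affine AK BK
  have hQ := hZ.affine AQ BQ
  have hscore : ∀ s : Fin p, IsSpline ι (a + c)
      (fun x => relu (((AK * X x + BK)ᵀ * (AQ * Z x + BQ)) s j)) := fun s =>
    ((isSpline_sum Finset.univ (fun t x => (AK * X x + BK) t s * (AQ * Z x + BQ) t j)
      (fun t _ => (hK t s).mul (hQ t j))).congr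
      (fun x => by simp [Matrix.mul_apply, Matrix.transpose_apply, mul_comm])).relu
  refine (isSpline_sum Finset.univ
    (fun s x => (AV * X x + BV) i s *
      relu (((AK * X x + BK)ᵀ * (AQ * Z x + BQ)) s j))
    (fun s _ => (hV i s).mul (hscore s))).congr (fun x => ?_)
  simp [encDecAttention, Matrix.mul_apply, matRelu]

theorem EntriesSpline.masked {n p d m : ℕ} {a : ℕ}
    (AQ AK : Matrix (Fin d) (Fin n) ℝ) (AV : Matrix (Fin m) (Fin n) ℝ)
    (BQ BK : Matrix (Fin d) (Fin p) ℝ) (BV : Matrix (Fin m) (Fin p) ℝ)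
    {X : (ι → ℝ) → Matrix (Fin n) (Fin p) ℝ} (hX : EntriesSpline a X) :
    EntriesSpline (a + (a + a)) (fun x => maskedAttention AQ AK AV BQ BK BV (X x)) := by
  intro i j
  have hV := hX.affine AV BV
  have hK := hX.affine AK BK
  have hQ := hX.affine AQ BQ
  have hmask : ∀ s : Fin p, IsSpline ι (a + a)
      (fun x => if s ≤ j then relu (((AK * X x + BK)ᵀ * (AQ * X x + BQ)) s j) else 0) := by
    intro s
    by_cases hsj : s ≤ j
    · simp only [if_pos hsj]
      exact ((isSpline_sum Finset.univ (fun t x => (AK * X x + BK) t s * (AQ * X x + BQ) t j)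
        (fun t _ => (hK t s).mul (hQ t j))).congr
        (fun x => by simp [Matrix.mul_apply, Matrix.transpose_apply, mul_comm])).relu
    · simp only [if_neg hsj]
      exact isSpline_const 0
  refine (isSpline_sum Finset.univ
    (fun s x => (AV * X x + BV) i s *
      (if s ≤ j then relu (((AK * X x + BK)ᵀ * (AQ * X x + BQ)) s j) else 0))
    (fun s _ => (hV i s).mul (hmask s))).congr (fun x => ?_)
  simp [maskedAttention, Matrix.mul_apply]

theorem EntriesSpline.multiMasked {n p d m h : ℕ} {a : ℕ}
    (AQ AK : Fin h → Matrix (Fin d) (Fin n) ℝ) (AV : Fin h → Matrix (Fin m) (Fin n) ℝ)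
    (BQ BK : Fin h → Matrix (Fin d) (Fin p) ℝ) (BV : Fin h → Matrix (Fin m) (Fin p) ℝ)
    {X : (ι → ℝ) → Matrix (Fin n) (Fin p) ℝ} (hX : EntriesSpline a X) :
    EntriesSpline (a + (a + a))
      (fun x => multiheadMaskedAttention AQ AK AV BQ BK BV (X x)) := fun i j =>
  (hX.masked (AQ (finProdFinEquiv.symm i).1) (AK (finProdFinEquiv.symm i).1)
    (AV (finProdFinEquiv.symm i).1) (BQ (finProdFinEquiv.symm i).1)
    (BK (finProdFinEquiv.symm i).1) (BV (finProdFinEquiv.symm i).1))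
    (finProdFinEquiv.symm i).2 j

theorem EntriesSpline.multiEncDec {n r p d m h : ℕ} {a c : ℕ}
    (AQ : Fin h → Matrix (Fin d) (Fin r) ℝ) (AK : Fin h → Matrix (Fin d) (Fin n) ℝ)
    (AV : Fin h → Matrix (Fin m) (Fin n) ℝ)
    (BQ BK : Fin h → Matrix (Fin d) (Fin p) ℝ) (BV : Fin h → Matrix (Fin m) (Fin p) ℝ)
    {X : (ι → ℝ) → Matrix (Fin n) (Fin p) ℝ} {Z : (ι → ℝ) → Matrix (Fin r) (Fin p) ℝ}
    (hX : EntriesSpline a X) (hZ : EntriesSpline c Z) :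
    EntriesSpline (a + (a + c))
      (fun x => multiheadEncDecAttention AQ AK AV BQ BK BV (X x) (Z x)) := fun i j =>
  (hX.encDec (AQ (finProdFinEquiv.symm i).1) (AK (finProdFinEquiv.symm i).1)
    (AV (finProdFinEquiv.symm i).1) (BQ (finProdFinEquiv.symm i).1)
    (BK (finProdFinEquiv.symm i).1) (BV (finProdFinEquiv.symm i).1) hZ)
    (finProdFinEquiv.symm i).2 j

theorem EntriesSpline.colwiseNN {a c p : ℕ} {φ : (Fin a → ℝ) → (Fin c → ℝ)} (hφ : IsNN φ)
    {M : (ι → ℝ) → Matrix (Fin a) (Fin p) ℝ} (hM : EntriesSpline k M) :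
    EntriesSpline k (fun x => colwise φ (M x)) := fun i j =>
  isSpline_comp_nn hφ (f := fun x r => M x r j) (fun r => hM r j) i

/-- Every ReLU-activated encoder–decoder block `τ(X,Y) = φ(γ(X, β(Y)))` — where `β` is a
multihead ReLU masked attention module, `γ` a multihead ReLU encoder–decoder attention module,
and `φ` a ReLU feed-forward neural network applied columnwise — is a quintic spline in `(X,Y)`;
moreover, it is a quadratic spline in `X` for each fixed `Y` and a cubic spline in `Y` for each
fixed `X`. -/
theorem encdec_block_is_quintic_spline (n r p n' : ℕ)
    (d₁ m₁ h₁ d₂ m₂ h₂ : ℕ)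
    (AQ₁ AK₁ : Fin h₁ → Matrix (Fin d₁) (Fin r) ℝ) (AV₁ : Fin h₁ → Matrix (Fin m₁) (Fin r) ℝ)
    (BQ₁ BK₁ : Fin h₁ → Matrix (Fin d₁) (Fin p) ℝ) (BV₁ : Fin h₁ → Matrix (Fin m₁) (Fin p) ℝ)
    (AQ₂ : Fin h₂ → Matrix (Fin d₂) (Fin (h₁ * m₁)) ℝ)
    (AK₂ : Fin h₂ → Matrix (Fin d₂) (Fin n) ℝ) (AV₂ : Fin h₂ → Matrix (Fin m₂) (Fin n) ℝ)
    (BQ₂ BK₂ : Fin h₂ → Matrix (Fin d₂) (Fin p) ℝ) (BV₂ : Fin h₂ → Matrix (Fin m₂) (Fin p) ℝ)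
    (φ : (Fin (h₂ * m₂) → ℝ) → (Fin n' → ℝ)) (hφ : IsNN φ)
    (τ : Matrix (Fin n) (Fin p) ℝ → Matrix (Fin r) (Fin p) ℝ → Matrix (Fin n') (Fin p) ℝ)
    (hτ : τ = fun X Y =>
      colwise φ (multiheadEncDecAttention AQ₂ AK₂ AV₂ BQ₂ BK₂ BV₂ X
        (multiheadMaskedAttention AQ₁ AK₁ AV₁ BQ₁ BK₁ BV₁ Y))) :
    IsPairSpline 5 τ ∧
    (∀ Y : Matrix (Fin r) (Fin p) ℝ, IsMatrixSpline 2 (fun X => τ X Y)) ∧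
    (∀ X : Matrix (Fin n) (Fin p) ℝ, IsMatrixSpline 3 (τ X)) := by
  subst hτ
  refine ⟨?_, ?_, ?_⟩
  · intro i j
    have hXE : EntriesSpline (ι := (Fin n × Fin p) ⊕ (Fin r × Fin p)) 1
        (fun x => Matrix.of fun a b => x (Sum.inl (a, b))) :=
      fun i j => isSpline_X (Sum.inl (i, j))
    have hYE : EntriesSpline (ι := (Fin n × Fin p) ⊕ (Fin r × Fin p)) 1
        (fun x => Matrix.of fun a b => x (Sum.inr (a, b))) :=
      fun i j => isSpline_X (Sum.inr (i, j))
    have hβ := hYE.multiMasked AQ₁ AK₁ AV₁ BQ₁ BK₁ BV₁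
    have hγ := (hXE.multiEncDec AQ₂ AK₂ AV₂ BQ₂ BK₂ BV₂ hβ)
    exact ((hγ.colwiseNN hφ).mono (by norm_num)) i j
  · intro Y i j
    have hXE : EntriesSpline (ι := Fin n × Fin p) 1
        (fun x => Matrix.of fun a b => x (a, b)) := fun i j => isSpline_X (i, j)
    have hZ : EntriesSpline (ι := Fin n × Fin p) 0
        (fun _ => multiheadMaskedAttention AQ₁ AK₁ AV₁ BQ₁ BK₁ BV₁ Y) :=
      fun i j => isSpline_const _
    have hγ := hXE.multiEncDec AQ₂ AK₂ AV₂ BQ₂ BK₂ BV₂ hZ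
    exact ((hγ.colwiseNN hφ).mono (by norm_num)) i j
  · intro X i j
    have hXE : EntriesSpline (ι := Fin r × Fin p) 0 (fun _ => X) :=
      fun i j => isSpline_const _
    have hYE : EntriesSpline (ι := Fin r × Fin p) 1
        (fun x => Matrix.of fun a b => x (a, b)) := fun i j => isSpline_X (i, j)
    have hβ := hYE.multiMasked AQ₁ AK₁ AV₁ BQ₁ BK₁ BV₁
    have hγ := hXE.multiEncDec AQ₂ AK₂ AV₂ BQ₂ BK₂ BV₂ hβ
    exact ((hγ.colwiseNN hφ).mono (by norm_num)) i j
end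
end

section
/- The Pierce–Birkhoff conjecture holds if and only if for every n and every spline f : ℝ^n → ℝ there exist k ∈ ℕ and a linear spline ℓ : ℝ^{C(n+k,k)} → ℝ such that f = ℓ ∘ v_k, where v_k is the degree-k Veronese map. -/
noncomputable section
/-- The Pierce–Birkhoff conjecture (in every dimension): every spline `f : ℝ^n → ℝ` is a finite
max of finite mins of polynomials. -/
def PierceBirkhoff : Prop :=
  ∀ (n : ℕ) (f : (Fin n → ℝ) → ℝ), (∃ k, IsSpline (Fin n) k f) →
    ∃ (m q : ℕ) (ξ : Fin (m + 1) → Fin (q + 1) → MvPolynomial (Fin n) ℝ),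
      ∀ x, f x = ⨆ i, ⨅ j, MvPolynomial.eval x (ξ i j)

/-- The index set of the degree-`k` Veronese map in `n` variables: exponent vectors of total
degree at most `k`.  It has cardinality `C(n+k, k)`. -/
abbrev VeroneseIdx (n k : ℕ) : Type := { d : Fin n → Fin (k + 1) // ∑ i, (d i : ℕ) ≤ k }

/-- The degree-`k` Veronese map, sending `x` to the vector of all monomials of degree at most
`k` in `x_1, …, x_n` (including the constant monomial `1`). -/
def veronese (n k : ℕ) (x : Fin n → ℝ) : VeroneseIdx n k → ℝ :=
  fun d => ∏ i, x i ^ (d.1 i : ℕ)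

/-!
A max-min of polynomials of degree `≤ k` is the max-min of their linearizations composed with the
Veronese map `v_k`, and a max-min of affine functions is a linear spline: on each cell of the sign
partition cut out by the pairwise differences of the pieces, their order, hence the piece realizing
the max-min, is constant. Conversely, a linear spline `ℓ` is a max-min of its affine pieces
(Ovchinnikov): following `ℓ` along the segment from `x` to `y`, a connectedness argument yields a
piece that is `≥ ℓ` at `x` and `≤ ℓ` at `y`. Composing with `v_k` turns affine pieces into
polynomials.
-/

open MvPolynomial AffineMap

section FiniteIndex

variable {L X I : Type*} [ConditionallyCompleteLattice L] [TopologicalSpace L]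
  [TopologicalSpace X] [Fintype I] [Nonempty I]

lemma Continuous.ciSup_of_fintype [ContinuousSup L] {f : I → X → L} (hf : ∀ i, Continuous (f i)) :
    Continuous fun x => ⨆ i, f i x := by
  simpa only [← Finset.sup'_univ_eq_ciSup] using
    Continuous.finset_sup'_apply Finset.univ_nonempty fun i _ => hf i

lemma Continuous.ciInf_of_fintype [ContinuousInf L] {f : I → X → L} (hf : ∀ i, Continuous (f i)) :
    Continuous fun x => ⨅ i, f i x := by
  simpa only [← Finset.inf'_univ_eq_ciInf] using
    Continuous.finset_inf'_apply Finset.univ_nonempty fun i _ => hf i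

end FiniteIndex

lemma exists_forall_iSup_iInf_eq {α β I J : Type*} [LinearOrder α] [ConditionallyCompleteLattice β]
    [Finite I] [Nonempty I] [Finite J] [Nonempty J] (r : I → J → α) :
    ∃ i₀ j₀, ∀ s : I → J → β, (∀ i j i' j', r i j ≤ r i' j' → s i j ≤ s i' j') →
      ⨆ i, ⨅ j, s i j = s i₀ j₀ := by
  choose jmin hjmin using fun i => Finite.exists_min (r i)
  obtain ⟨i₀, hi₀⟩ := Finite.exists_max fun i => r i (jmin i)
  refine ⟨i₀, jmin i₀, fun s hs => le_antisymm (ciSup_le fun i => ?_) ?_⟩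
  · exact (ciInf_le (Set.finite_range _).bddBelow (jmin i)).trans (hs _ _ _ _ (hi₀ i))
  · refine le_ciSup_of_le (Set.finite_range _).bddAbove i₀ (le_ciInf fun j => ?_)
    exact hs _ _ _ _ (hjmin i₀ j)

lemma isSpline_of_forall_sign_eq {ι P : Type} [Fintype ι] [Finite P] {k : ℕ}
    {f : (ι → ℝ) → ℝ} (hf : Continuous f) (π : P → MvPolynomial ι ℝ)
    (hπ : ∀ a, (π a).totalDegree ≤ k)
    (hcell : ∀ x₀, ∃ ξ : MvPolynomial ι ℝ, ξ.totalDegree ≤ k ∧ ∀ x,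
      (∀ a, SignType.sign (eval x (π a)) = SignType.sign (eval x₀ (π a))) → f x = eval x ξ) :
    IsSpline ι k f := by
  let e := Finite.equivFin P
  refine ⟨hf, _, π ∘ e.symm, fun _ => hπ _, fun θ => ?_⟩
  by_cases hθ : ∃ x₀, ∀ b, SignType.sign (eval x₀ (π (e.symm b))) = θ b
  · obtain ⟨x₀, hx₀⟩ := hθ
    obtain ⟨ξ, hξ, hfξ⟩ := hcell x₀
    refine ⟨ξ, hξ, fun x hx => hfξ x fun a => ?_⟩
    simpa using (hx (e a)).trans (hx₀ (e a)).symm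
  · exact ⟨0, by simp, fun x hx => (hθ ⟨x, hx⟩).elim⟩

theorem isSpline_iSup_iInf {ι I J : Type} [Fintype ι] [Fintype I] [Nonempty I] [Fintype J]
    [Nonempty J] {k : ℕ} (p : I → J → MvPolynomial ι ℝ) (hp : ∀ i j, (p i j).totalDegree ≤ k) :
    IsSpline ι k fun x => ⨆ i, ⨅ j, eval x (p i j) := by
  refine isSpline_of_forall_sign_eq
    (Continuous.ciSup_of_fintype fun i => Continuous.ciInf_of_fintype fun j => continuous_eval _)
    (fun a : (I × J) × (I × J) => p a.1.1 a.1.2 - p a.2.1 a.2.2)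
    (fun a => (totalDegree_sub _ _).trans (max_le (hp _ _) (hp _ _))) fun x₀ => ?_
  obtain ⟨i₀, j₀, h⟩ := exists_forall_iSup_iInf_eq (β := ℝ) fun i j => eval x₀ (p i j)
  refine ⟨p i₀ j₀, hp i₀ j₀, fun x hx => h _ fun i j i' j' hle => ?_⟩
  have hsign := hx ((i, j), (i', j'))
  simp only [map_sub] at hsign
  rwa [← sub_nonpos, ← sign_nonpos_iff, hsign, sign_nonpos_iff, sub_nonpos]

namespace VeroneseIdx

/-- Exponents of total degree `> k` are sent to the constant monomial. -/
def ofFinsupp {n k : ℕ} (d : Fin n →₀ ℕ) : VeroneseIdx n k :=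
  if h : ∑ i, d i ≤ k then
    ⟨fun i => ⟨d i, Nat.lt_succ_of_le
      ((Finset.single_le_sum (fun j _ => Nat.zero_le (d j)) (Finset.mem_univ i)).trans h)⟩,
      by simpa using h⟩
  else ⟨0, by simp⟩

lemma veronese_ofFinsupp {n k : ℕ} {d : Fin n →₀ ℕ} (hd : ∑ i, d i ≤ k) (x : Fin n → ℝ) :
    veronese n k x (ofFinsupp d) = ∏ i, x i ^ d i := by
  simp [veronese, ofFinsupp, dif_pos hd]

end VeroneseIdx

def veroneseMonomial (n k : ℕ) (d : VeroneseIdx n k) : MvPolynomial (Fin n) ℝ :=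
  ∏ i, X i ^ (d.1 i : ℕ)

lemma eval_aeval_veroneseMonomial {n k : ℕ} (p : MvPolynomial (VeroneseIdx n k) ℝ)
    (x : Fin n → ℝ) : eval x (aeval (veroneseMonomial n k) p) = eval (veronese n k x) p := by
  have hmonomial : (fun d => aeval x (veroneseMonomial n k d)) = veronese n k x :=
    funext fun d => by simp [veroneseMonomial, veronese]
  rw [← aeval_eq_eval, ← aeval_eq_eval, comp_aeval_apply, hmonomial]

def linearizeVeronese (k : ℕ) {n : ℕ} (p : MvPolynomial (Fin n) ℝ) :
    MvPolynomial (VeroneseIdx n k) ℝ :=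
  ∑ d ∈ p.support, C (p.coeff d) * X (VeroneseIdx.ofFinsupp d)

lemma totalDegree_linearizeVeronese_le (k : ℕ) {n : ℕ} (p : MvPolynomial (Fin n) ℝ) :
    (linearizeVeronese k p).totalDegree ≤ 1 := by
  refine (totalDegree_finsetSum _ _).trans (Finset.sup_le fun d _ => ?_)
  exact (totalDegree_mul _ _).trans (by simp [totalDegree_X])

lemma eval_veronese_linearizeVeronese {n k : ℕ} {p : MvPolynomial (Fin n) ℝ}
    (hp : p.totalDegree ≤ k) (x : Fin n → ℝ) :
    eval (veronese n k x) (linearizeVeronese k p) = eval x p := by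
  rw [linearizeVeronese, map_sum, eval_eq' x p]
  refine Finset.sum_congr rfl fun d hd => ?_
  have hdk : ∑ i, d i ≤ k := by
    rw [← Finsupp.degree_eq_sum]
    exact (le_totalDegree hd).trans hp
  rw [map_mul, eval_C, eval_X, VeroneseIdx.veronese_ofFinsupp hdk]

lemma Finsupp.eq_zero_or_eq_single_of_degree_le_one {σ : Type*} {d : σ →₀ ℕ}
    (hd : d.degree ≤ 1) : d = 0 ∨ ∃ i, d = Finsupp.single i 1 := by
  rcases Nat.le_one_iff_eq_zero_or_eq_one.mp hd with h | h
  · exact Or.inl ((Finsupp.degree_eq_zero_iff d).mp h)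
  · exact Or.inr ((Finsupp.sum_eq_one_iff d).mp h)

lemma MvPolynomial.eval_lineMap_of_totalDegree_le_one {R σ : Type*} [CommRing R]
    {p : MvPolynomial σ R} (hp : p.totalDegree ≤ 1) (x y : σ → R) (t : R) :
    eval (lineMap x y t) p = lineMap (eval x p) (eval y p) t := by
  have hmonomial : ∀ d ∈ p.support, ∏ i ∈ d.support, lineMap (x i) (y i) t ^ d i =
      (1 - t) * ∏ i ∈ d.support, x i ^ d i + t * ∏ i ∈ d.support, y i ^ d i := by
    intro d hd
    rcases Finsupp.eq_zero_or_eq_single_of_degree_le_one ((le_totalDegree hd).trans hp)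
      with rfl | ⟨i, rfl⟩
    · simp
    · simp [lineMap_apply_ring]
  rw [eval_eq, eval_eq, eval_eq, lineMap_apply_ring, Finset.mul_sum, Finset.mul_sum,
    ← Finset.sum_add_distrib]
  refine Finset.sum_congr rfl fun d hd => ?_
  simp only [pi_lineMap_apply, hmonomial d hd]
  ring

lemma exists_mem_of_Ico_subset_iUnion {J : Type*} [Finite J] {A : J → Set ℝ}
    (hA : ∀ j, IsClosed (A j)) {a c : ℝ} (hac : a < c) (hcover : Set.Ico a c ⊆ ⋃ j, A j) :
    ∃ j, c ∈ A j ∧ (Set.Ico a c ∩ A j).Nonempty := by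
  have hc : c ∈ closure (⋃ j, Set.Ico a c ∩ A j) := by
    rw [← Set.inter_iUnion, Set.inter_eq_left.mpr hcover, closure_Ico hac.ne]
    exact Set.right_mem_Icc.mpr hac.le
  rw [closure_iUnion_of_finite] at hc
  obtain ⟨j, hj⟩ := Set.mem_iUnion.mp hc
  exact ⟨j, closure_minimal Set.inter_subset_right (hA j) hj, closure_nonempty_iff.mp ⟨c, hj⟩⟩

theorem exists_le_lineMap_zero_and_lineMap_one_le {J : Type*} [Finite J] (u v : J → ℝ)
    {F : ℝ → ℝ} (hF : Continuous F) (hsel : ∀ t, ∃ j, F t = lineMap (u j) (v j) t) :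
    ∃ j, F 0 ≤ u j ∧ v j ≤ F 1 := by
  set T : Set ℝ := Set.Icc 0 1 ∩ ⋃ j, {t | v j ≤ F 1 ∧ F t ≤ lineMap (u j) (v j) t}
  have hT1 : (1 : ℝ) ∈ T := by
    obtain ⟨j, hj⟩ := hsel 1
    rw [lineMap_apply_one] at hj
    exact ⟨Set.right_mem_Icc.mpr zero_le_one, Set.mem_iUnion.mpr ⟨j, hj.ge, by simp [hj]⟩⟩
  have hTbdd : BddBelow T := ⟨0, fun t ht => ht.1.1⟩
  have hTclosed : IsClosed T := isClosed_Icc.inter <| isClosed_iUnion_of_finite fun j =>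
    isClosed_const.inter (isClosed_le hF lineMap_continuous)
  set c := sInf T
  obtain ⟨⟨hc0, hc1⟩, hcT⟩ : c ∈ T := hTclosed.csInf_mem ⟨1, hT1⟩ hTbdd
  obtain ⟨j, hj1, hjc⟩ := Set.mem_iUnion.mp hcT
  rcases hc0.eq_or_lt with hc | hc
  · exact ⟨j, by simpa [← hc] using hjc, hj1⟩
  exfalso
  have hbelow : ∀ t ∈ Set.Ico 0 c, ∀ j, v j ≤ F 1 → lineMap (u j) (v j) t < F t := by
    intro t ht j hj
    by_contra! h
    exact notMem_of_lt_csInf ht.2 hTbdd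
      ⟨⟨ht.1, ht.2.le.trans hc1⟩, Set.mem_iUnion.mpr ⟨j, hj, h⟩⟩
  obtain ⟨l, hlc : F c = lineMap (u l) (v l) c, t, ht, hlt : F t = lineMap (u l) (v l) t⟩ :=
    exists_mem_of_Ico_subset_iUnion (fun l => isClosed_eq hF lineMap_continuous) hc
      fun t _ => Set.mem_iUnion.mpr (hsel t)
  have hjt := hbelow t ht j hj1
  by_cases hl1 : v l ≤ F 1
  · exact (hbelow t ht l hl1).ne hlt.symm
  -- `D` is affine, positive at `t` and at `1`, but nonpositive at `c ∈ (t, 1]`.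
  set D : ℝ → ℝ := fun s => lineMap (u l) (v l) s - lineMap (u j) (v j) s with hD
  have hDt : 0 < D t := by simp only [hD]; linarith
  have hDc : D c ≤ 0 := by simp only [hD]; linarith
  have hD1 : 0 < D 1 := by simp only [hD, lineMap_apply_one]; linarith
  simp only [hD, lineMap_apply_ring'] at hDt hDc hD1
  nlinarith [mul_pos (sub_pos.mpr ht.2) (sub_pos.mpr (hD1.trans_le' hDc)),
    mul_nonneg (sub_nonneg.mpr hc1) (sub_nonneg.mpr (hDc.trans hDt.le))]

theorem exists_le_apply_and_apply_le {E J : Type*} [AddCommGroup E] [Module ℝ E]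
    [TopologicalSpace E] [IsTopologicalAddGroup E] [ContinuousSMul ℝ E] [Finite J]
    {g : J → E → ℝ} (hg : ∀ j x y (t : ℝ), g j (lineMap x y t) = lineMap (g j x) (g j y) t)
    {ℓ : E → ℝ} (hℓ : Continuous ℓ) (hsel : ∀ y, ∃ j, ℓ y = g j y) (x y : E) :
    ∃ j, ℓ x ≤ g j x ∧ g j y ≤ ℓ y := by
  have hsegment : ∀ t : ℝ, ∃ j, ℓ (lineMap x y t) = lineMap (g j x) (g j y) t := fun t => by
    obtain ⟨j, hj⟩ := hsel (lineMap x y t)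
    exact ⟨j, hj.trans (hg j x y t)⟩
  simpa using exists_le_lineMap_zero_and_lineMap_one_le (fun j => g j x) (fun j => g j y)
    (hℓ.comp lineMap_continuous) hsegment

lemma exists_equiv_fin_succ (α : Type*) [Finite α] [Nonempty α] :
    ∃ m, Nonempty (Fin (m + 1) ≃ α) := by
  obtain ⟨n, ⟨e⟩⟩ := Finite.exists_equiv_fin α
  obtain ⟨m, rfl⟩ : ∃ m, n = m + 1 :=
    Nat.exists_eq_succ_of_ne_zero (Fin.pos_iff_nonempty.mpr (e.nonempty_congr.mp ‹_›)).ne'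
  exact ⟨m, ⟨e.symm⟩⟩

/-- Ovchinnikov: for each `x`, replacing every piece that lies below `ℓ` at `x` by the piece
active at `x` gives a family whose minimum is `≤ ℓ` everywhere (by `hsep`) and `= ℓ` at `x`. -/
theorem exists_eq_iSup_iInf_of_forall_exists_le {E J : Type*} [Nonempty E] [Finite J]
    (g : J → E → ℝ) {ℓ : E → ℝ} (hsel : ∀ y, ∃ j, ℓ y = g j y)
    (hsep : ∀ x y, ∃ j, ℓ x ≤ g j x ∧ g j y ≤ ℓ y) :
    ∃ (m q : ℕ) (σ : Fin (m + 1) → Fin (q + 1) → J), ∀ y, ℓ y = ⨆ i, ⨅ j, g (σ i j) y := by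
  classical
  choose active hactive using hsel
  have : Nonempty J := ⟨active (Classical.arbitrary E)⟩
  let R := {τ : J → J // ∀ y, ⨅ j, g (τ j) y ≤ ℓ y}
  let τ (x : E) : J → J := fun j => if ℓ x ≤ g j x then j else active x
  have hτ_le : ∀ x y, ⨅ j, g (τ x j) y ≤ ℓ y := fun x y => by
    obtain ⟨j, hjx, hjy⟩ := hsep x y
    exact (ciInf_le (Set.finite_range _).bddBelow j).trans (by simpa [τ, hjx] using hjy)
  have hτ_eq : ∀ x, ⨅ j, g (τ x j) x = ℓ x := fun x => by
    refine le_antisymm (hτ_le x x) (le_ciInf fun j => ?_)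
    by_cases h : ℓ x ≤ g j x
    · simpa only [τ, if_pos h] using h
    · simpa only [τ, if_neg h] using (hactive x).le
  have : Nonempty R := ⟨⟨τ (Classical.arbitrary E), hτ_le _⟩⟩
  obtain ⟨m, ⟨eR⟩⟩ := exists_equiv_fin_succ R
  obtain ⟨q, ⟨eJ⟩⟩ := exists_equiv_fin_succ J
  refine ⟨m, q, fun i j => (eR i).1 (eJ j), fun y => le_antisymm ?_ (ciSup_le fun i => ?_)⟩
  · refine le_ciSup_of_le (Set.finite_range _).bddAbove (eR.symm ⟨τ y, hτ_le y⟩) ?_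
    dsimp only
    rw [eR.apply_symm_apply, eJ.iInf_comp (g := fun j => g (τ y j) y), hτ_eq]
  · dsimp only
    rw [eJ.iInf_comp (g := fun j => g ((eR i).1 j) y)]
    exact (eR i).2 y

theorem IsSpline.exists_eq_iSup_iInf {ι : Type} [Fintype ι] {ℓ : (ι → ℝ) → ℝ}
    (hℓ : IsSpline ι 1 ℓ) :
    ∃ (m q : ℕ) (ξ : Fin (m + 1) → Fin (q + 1) → MvPolynomial ι ℝ),
      ∀ y, ℓ y = ⨆ i, ⨅ j, eval y (ξ i j) := by
  obtain ⟨hcont, b, π, -, hcell⟩ := hℓ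
  choose ξ hξ hℓξ using hcell
  have hsel : ∀ y, ∃ θ, ℓ y = eval y (ξ θ) :=
    fun y => ⟨fun i => SignType.sign (eval y (π i)), hℓξ _ y fun _ => rfl⟩
  have hsep := exists_le_apply_and_apply_le
    (fun θ x y t => eval_lineMap_of_totalDegree_le_one (hξ θ) x y t) hcont hsel
  obtain ⟨m, q, σ, hσ⟩ := exists_eq_iSup_iInf_of_forall_exists_le _ hsel hsep
  exact ⟨m, q, fun i j => ξ (σ i j), hσ⟩

theorem exists_isSpline_one_comp_veronese {n : ℕ} {I J : Type} [Fintype I] [Nonempty I]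
    [Fintype J] [Nonempty J] (ξ : I → J → MvPolynomial (Fin n) ℝ) :
    ∃ (k : ℕ) (ℓ : (VeroneseIdx n k → ℝ) → ℝ),
      IsSpline (VeroneseIdx n k) 1 ℓ ∧ ∀ x, ⨆ i, ⨅ j, eval x (ξ i j) = ℓ (veronese n k x) := by
  obtain ⟨k, hk⟩ := Finite.exists_le fun a : I × J => (ξ a.1 a.2).totalDegree
  refine ⟨k, _, isSpline_iSup_iInf (fun i j => linearizeVeronese k (ξ i j))
    fun i j => totalDegree_linearizeVeronese_le k _, fun x => ?_⟩
  simp only [eval_veronese_linearizeVeronese (hk (_, _))]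

/-- The Pierce–Birkhoff conjecture holds if and only if every spline `f : ℝ^n → ℝ` factors as
`f = ℓ ∘ v_k` for some `k` and some linear spline `ℓ`. -/
theorem pierceBirkhoff_iff_spline_factors_through_veronese :
    PierceBirkhoff ↔
      ∀ (n : ℕ) (f : (Fin n → ℝ) → ℝ), (∃ k, IsSpline (Fin n) k f) →
        ∃ (k : ℕ) (ℓ : (VeroneseIdx n k → ℝ) → ℝ),
          IsSpline (VeroneseIdx n k) 1 ℓ ∧ ∀ x, f x = ℓ (veronese n k x) := by
  constructor
  · intro hPB n f hf
    obtain ⟨m, q, ξ, hξ⟩ := hPB n f hf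
    obtain ⟨k, ℓ, hℓ, hfactor⟩ := exists_isSpline_one_comp_veronese ξ
    exact ⟨k, ℓ, hℓ, fun x => (hξ x).trans (hfactor x)⟩
  · intro hfactor n f hf
    obtain ⟨k, ℓ, hℓ, hfℓ⟩ := hfactor n f hf
    obtain ⟨m, q, ξ, hξ⟩ := hℓ.exists_eq_iSup_iInf
    exact ⟨m, q, fun i j => aeval (veroneseMonomial n k) (ξ i j), fun x => by
      simp only [hfℓ, hξ, eval_aeval_veroneseMonomial]⟩
end
end
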